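/- arXiv:2510.08221 — 4 statements merged into one kernel-verified Lean document; each statement's English description precedes it below -/
import Mathlib

section
/- Let a finite group H act by automorphisms on a finite nilpotent group N. Then H acts Frobeniusly (fixed-point-freely) on N/Φ(N) if and only if H acts Frobeniusly on N/N'. -/
/-- `H` (acting on `N` via `φ`) acts Frobeniusly (fixed-point-freely) on the quotient
`N/K`: whenever a nontrivial `h ∈ H` fixes the coset `nK`, we have `n ∈ K`. -/
def ActsFrobeniuslyOnQuotient {H N : Type*} [Group H] [Group N]
    (φ : H →* MulAut N) (K : Subgroup N) : Prop :=
  ∀ h : H, h ≠ 1 → ∀ n : N, n⁻¹ * φ h n ∈ K → n ∈ K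

open Subgroup

lemma my_commutator_le_frattini {N : Type*} [Group N] [Group.IsNilpotent N] :
    commutator N ≤ frattini N := by
  refine le_iInf₂ fun M hM => ?_
  replace hM : IsCoatom M := hM
  haveI : M.Normal := Subgroup.NormalizerCondition.normal_of_coatom M
    (normalizerCondition_of_isNilpotent) hM
  have hcyc : IsCyclic (N ⧸ M) := by
    rcases subsingleton_or_nontrivial (N ⧸ M) with h | h
    · exact ⟨1, fun x => by simp [Subsingleton.elim x 1]⟩
    · obtain ⟨x, hx⟩ := exists_ne (1 : N ⧸ M)
      refine ⟨x, fun y => ?_⟩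
      have h1 : M ≤ (Subgroup.zpowers x).comap (QuotientGroup.mk' M) := by
        intro m hm
        simp only [Subgroup.mem_comap]
        have : QuotientGroup.mk' M m = 1 := (QuotientGroup.eq_one_iff m).mpr hm
        rw [this]; exact one_mem _
      have hmc := Subgroup.map_comap_eq_self_of_surjective (QuotientGroup.mk'_surjective M)
        (Subgroup.zpowers x)
      by_cases hc : (Subgroup.zpowers x).comap (QuotientGroup.mk' M) = M
      · exfalso
        rw [hc] at hmc
        have hx' : x ∈ Subgroup.map (QuotientGroup.mk' M) M := hmc ▸ Subgroup.mem_zpowers x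
        obtain ⟨m, hm, rfl⟩ := hx'
        exact hx ((QuotientGroup.eq_one_iff m).mpr hm)
      · have htop : (Subgroup.zpowers x).comap (QuotientGroup.mk' M) = ⊤ :=
          hM.2 _ (lt_of_le_of_ne h1 (Ne.symm hc))
        rw [htop, Subgroup.map_top_of_surjective _ (QuotientGroup.mk'_surjective M)] at hmc
        show y ∈ Subgroup.zpowers x
        rw [← hmc]; trivial
  have hcomm : ∀ a b : N ⧸ M, a * b = b * a := by
    obtain ⟨g, hg⟩ := hcyc
    intro a b
    obtain ⟨i, rfl⟩ := hg a
    obtain ⟨j, rfl⟩ := hg b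
    rw [← zpow_add, ← zpow_add, add_comm]
  rw [_root_.commutator_def, Subgroup.commutator_le]
  intro g _ n _
  rw [commutatorElement_def, ← QuotientGroup.eq_one_iff]
  simp only [QuotientGroup.mk_mul, QuotientGroup.mk_inv]
  rw [hcomm ((g : N ⧸ M)) (n : N ⧸ M)]
  group

lemma my_isCoatom_map {G G' : Type*} [Group G] [Group G'] {π : G →* G'}
    (hs : Function.Surjective π) {M : Subgroup G} (hk : π.ker ≤ M) (hM : IsCoatom M) :
    IsCoatom (M.map π) := by
  have hcm : (M.map π).comap π = M := by
    rw [Subgroup.comap_map_eq, sup_of_le_left hk]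
  constructor
  · intro htop
    rw [htop, Subgroup.comap_top] at hcm
    exact hM.1 hcm.symm
  · intro K hK
    have h1 : M ≤ K.comap π := hcm ▸ Subgroup.comap_mono hK.le
    have h2 : M ≠ K.comap π := by
      intro he
      have : K = M.map π := by
        rw [← Subgroup.map_comap_eq_self_of_surjective hs K, ← he]
      rw [this] at hK
      exact absurd rfl hK.ne
    have := hM.2 _ (lt_of_le_of_ne h1 h2)
    rw [← Subgroup.map_comap_eq_self_of_surjective hs K, this,
      Subgroup.map_top_of_surjective _ hs]

lemma my_map_frattini {G G' : Type*} [Group G] [Group G'] {π : G →* G'}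
    (hs : Function.Surjective π) (hk : π.ker ≤ frattini G) :
    (frattini G).map π = frattini G' := by
  apply le_antisymm
  · rw [Subgroup.map_le_iff_le_comap]
    exact frattini_le_comap_frattini_of_surjective hs
  · have hcle : (frattini G').comap π ≤ frattini G := by
      refine le_iInf₂ fun M hM => ?_
      replace hM : IsCoatom M := hM
      have hkM : π.ker ≤ M := hk.trans (frattini_le_coatom hM)
      have h1 : frattini G' ≤ M.map π := frattini_le_coatom (my_isCoatom_map hs hkM hM)
      calc (frattini G').comap π ≤ (M.map π).comap π := Subgroup.comap_mono h1
        _ = M := by rw [Subgroup.comap_map_eq, sup_of_le_left hkM]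
    calc frattini G' = ((frattini G').comap π).map π :=
          (Subgroup.map_comap_eq_self_of_surjective hs _).symm
      _ ≤ (frattini G).map π := Subgroup.map_mono hcle

lemma my_core {A : Type*} [CommGroup A] [Finite A] (F : A →* A)
    (hFΦ : ∀ a ∈ frattini A, F a ∈ frattini A) :
    (∀ a, F a ∈ frattini A → a ∈ frattini A) ↔ Function.Injective F := by
  constructor
  · intro hyp
    have hle : frattini A ≤ Subgroup.comap F (frattini A) := fun a ha => hFΦ a ha
    let Fq : A ⧸ frattini A →* A ⧸ frattini A := QuotientGroup.map _ _ F hle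
    have hinj : Function.Injective Fq := by
      rw [injective_iff_map_eq_one]
      intro x hx
      obtain ⟨a, rfl⟩ := QuotientGroup.mk_surjective x
      have h1 : Fq (QuotientGroup.mk a) = QuotientGroup.mk (F a) := rfl
      rw [h1, QuotientGroup.eq_one_iff] at hx
      rw [QuotientGroup.eq_one_iff]
      exact hyp a hx
    have hsurj := (Finite.injective_iff_surjective.mp hinj)
    have hrt : F.range ⊔ frattini A = ⊤ := by
      rw [eq_top_iff]
      intro b _
      obtain ⟨x, hx⟩ := hsurj (QuotientGroup.mk b)
      obtain ⟨a, rfl⟩ := QuotientGroup.mk_surjective x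
      have h1 : (QuotientGroup.mk (F a) : A ⧸ frattini A) = QuotientGroup.mk b := hx
      have h2 : (F a)⁻¹ * b ∈ frattini A := (QuotientGroup.eq).mp h1
      have h3 : b = F a * ((F a)⁻¹ * b) := by group
      rw [h3]
      exact Subgroup.mul_mem _ (Subgroup.mem_sup_left ⟨a, rfl⟩) (Subgroup.mem_sup_right h2)
    have hrtop : F.range = ⊤ := frattini_nongenerating hrt
    exact Finite.injective_iff_surjective.mpr (MonoidHom.range_eq_top.mp hrtop)
  · intro hinj a ha
    have hres : ∀ b ∈ frattini A, ∃ c ∈ frattini A, F c = b := by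
      have ginj : Function.Injective (fun c : frattini A => (⟨F c, hFΦ c c.2⟩ : frattini A)) := by
        intro x y hxy
        exact Subtype.ext (hinj (Subtype.ext_iff.mp hxy))
      have gsurj := Finite.injective_iff_surjective.mp ginj
      intro b hb
      obtain ⟨c, hc⟩ := gsurj ⟨b, hb⟩
      exact ⟨c, c.2, Subtype.ext_iff.mp hc⟩
    obtain ⟨c, hc, hFc⟩ := hres (F a) ha
    rwa [← hinj hFc]

/-- Let a finite group `H` act by automorphisms on a finite nilpotent
group `N`. Then `H` acts Frobeniusly on `N/Φ(N)` iff it acts Frobeniusly on `N/N'`. -/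
theorem stmt8 {H N : Type*} [Group H] [Group N] [Finite H] [Finite N]
    [Group.IsNilpotent N] (φ : H →* MulAut N) :
    ActsFrobeniuslyOnQuotient φ (frattini N) ↔
      ActsFrobeniuslyOnQuotient φ (commutator N) := by
  set A := Abelianization N with hA
  set π : N →* A := Abelianization.of with hπ
  have hπs : Function.Surjective π := fun x => Quotient.inductionOn' x (fun n => ⟨n, rfl⟩)
  have hker : ∀ x : N, π x = 1 ↔ x ∈ commutator N := fun x => QuotientGroup.eq_one_iff x
  have hkerπ : π.ker = commutator N := by
    ext x; rw [MonoidHom.mem_ker]; exact hker x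
  have hmap : (frattini N).map π = frattini A :=
    my_map_frattini hπs (by rw [hkerπ]; exact my_commutator_le_frattini)
  have hfr : ∀ x : N, x ∈ frattini N ↔ π x ∈ frattini A := by
    intro x
    constructor
    · intro hx
      rw [← hmap]
      exact Subgroup.mem_map_of_mem π hx
    · intro hx
      rw [← hmap] at hx
      obtain ⟨y, hy, hyx⟩ := hx
      have : y⁻¹ * x ∈ commutator N := by
        rw [← hker]; rw [map_mul, map_inv, hyx]; group
      have h2 : y⁻¹ * x ∈ frattini N := my_commutator_le_frattini this
      have h3 : x = y * (y⁻¹ * x) := by group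
      rw [h3]; exact Subgroup.mul_mem _ hy h2
  -- per h data
  have main : ∀ h : H, ∃ F : A →* A,
      (∀ n : N, F (π n) = π (n⁻¹ * φ h n)) ∧ (∀ a ∈ frattini A, F a ∈ frattini A) := by
    intro h
    set e : A ≃* A := MulEquiv.abelianizationCongr (φ h : N ≃* N) with he
    refine ⟨e.toMonoidHom * (MonoidHom.id A)⁻¹, fun n => ?_, fun a ha => ?_⟩
    · show e (π n) * (π n)⁻¹ = π (n⁻¹ * (φ h) n)
      have h1 : e (π n) = π ((φ h) n) := rfl
      rw [h1, map_mul, map_inv, mul_comm]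
    · show e a * a⁻¹ ∈ frattini A
      have h1 : e a ∈ frattini A := by
        have h2 : (frattini A).comap e.toMonoidHom = frattini A :=
          Subgroup.characteristic_iff_comap_eq.mp frattini_characteristic e
        rw [← h2] at ha
        exact Subgroup.mem_comap.mp ha
      exact Subgroup.mul_mem _ h1 (Subgroup.inv_mem _ ha)
  constructor
  · intro hyp h hh n hn
    obtain ⟨F, hF, hFΦ⟩ := main h
    have hcond : ∀ a : A, F a ∈ frattini A → a ∈ frattini A := by
      intro a ha
      obtain ⟨m, rfl⟩ := hπs a
      rw [hF m] at ha
      exact (hfr m).mp (hyp h hh m ((hfr _).mpr ha))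
    have hinj : Function.Injective F := (my_core F hFΦ).mp hcond
    have h1 : F (π n) = 1 := by
      rw [hF n]; exact (hker _).mpr hn
    have h2 : π n = 1 := by
      apply hinj; rw [h1, map_one]
    exact (hker n).mp h2
  · intro hyp h hh n hn
    obtain ⟨F, hF, hFΦ⟩ := main h
    have hinj : Function.Injective F := by
      rw [injective_iff_map_eq_one]
      intro a ha
      obtain ⟨m, rfl⟩ := hπs a
      rw [hF m] at ha
      exact (hker m).mpr (hyp h hh m ((hker _).mp ha))
    have hcond := (my_core F hFΦ).mpr hinj
    have h1 : F (π n) ∈ frattini A := by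
      rw [hF n]; exact (hfr _).mp hn
    exact (hfr n).mpr (hcond _ h1)
end

section
/- Let the quaternion group H ≅ Q₈ act Frobeniusly on a finite group N, let G = N ⋊ H, and let A/B be a G-chief factor in N of order q^m for a prime q. Then m = 2. -/
section QuatSpan
variable {q : ℕ} {M : Type*} [AddCommGroup M] [Module (ZMod q) M]

lemma quat_span (T S : M →ₗ[ZMod q] M)
    (hTT : ∀ x, T (T x) = -x) (hSS : ∀ x, S (S x) = -x)
    (hTS : ∀ x, T (S x) = -S (T x))
    (a b : ZMod q) (hab : a ^ 2 + b ^ 2 = -1)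
    {w : M} (hw : w ≠ 0) :
    ∃ v₁ v₂ : M, v₁ ≠ 0 ∧
      (∀ u ∈ Submodule.span (ZMod q) {v₁, v₂}, T u ∈ Submodule.span (ZMod q) {v₁, v₂}) ∧
      (∀ u ∈ Submodule.span (ZMod q) {v₁, v₂}, S u ∈ Submodule.span (ZMod q) {v₁, v₂}) := by
  set U : M →ₗ[ZMod q] M := a • T + b • S with hU
  have hUapp : ∀ x, U x = a • T x + b • S x := fun x => by
    simp [hU, LinearMap.add_apply, LinearMap.smul_apply]
  have hSTS : ∀ x, S (T (S x)) = T x := by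
    intro x
    have h := hTS (S x)
    rw [hSS, map_neg] at h
    exact (neg_inj.mp h).symm
  have hTST : ∀ x, T (S (T x)) = S x := by
    intro x
    have h := hTS (T x)
    rw [hTT, map_neg, neg_neg] at h
    exact h
  have hUK : ∀ x, U (T (S x)) = b • T x - a • S x := by
    intro x
    rw [hUapp, hTT, hSTS]
    match_scalars <;> ring
  have hKU : ∀ x, T (S (U x)) = a • S x - b • T x := by
    intro x
    rw [hUapp, map_add, map_add, map_smul, map_smul, map_smul, map_smul, hTST]
    rw [hSS, map_neg]
    match_scalars <;> ring
  have hU2 : ∀ x, U (U x) = x := by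
    intro x
    simp only [hUapp, map_add, map_smul, hTT, hTS, hSS]
    match_scalars <;> first | ring1 | linear_combination hab | linear_combination -hab
  -- operator identities recovering T and S from U and U∘K
  have hTid : ∀ x, a • U x + b • U (T (S x)) = -T x := by
    intro x
    rw [hUapp, hUK]
    match_scalars <;> first | ring1 | linear_combination hab | linear_combination -hab
  have hSid : ∀ x, b • U x - a • U (T (S x)) = -S x := by
    intro x
    rw [hUapp, hUK]
    match_scalars <;> first | ring1 | linear_combination hab | linear_combination -hab
  -- main argument for an eigenvector of U
  have main : ∀ (v : M) (ε : ZMod q), U v = ε • v → v ≠ 0 →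
      ∃ v₁ v₂ : M, v₁ ≠ 0 ∧
      (∀ u ∈ Submodule.span (ZMod q) {v₁, v₂}, T u ∈ Submodule.span (ZMod q) {v₁, v₂}) ∧
      (∀ u ∈ Submodule.span (ZMod q) {v₁, v₂}, S u ∈ Submodule.span (ZMod q) {v₁, v₂}) := by
    intro v ε hUv hv0
    refine ⟨v, T (S v), hv0, ?_, ?_⟩
    all_goals {
      have hvW : v ∈ Submodule.span (ZMod q) {v, T (S v)} :=
        Submodule.subset_span (Set.mem_insert _ _)
      have hKW : T (S v) ∈ Submodule.span (ZMod q) {v, T (S v)} :=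
        Submodule.subset_span (Set.mem_insert_of_mem _ rfl)
      have hUKv : U (T (S v)) = -(ε • T (S v)) := by
        have h1 := hUK v
        have h2 := hKU v
        rw [hUv, map_smul, map_smul] at h2
        rw [h1, ← neg_sub, ← h2]
      have hTv : T v = (-(a * ε)) • v + (b * ε) • T (S v) := by
        have h := hTid v
        rw [hUv, hUKv] at h
        first
        | linear_combination (norm := module) -h
        | linear_combination (norm := module) h
      have hSv : S v = (-(b * ε)) • v + (-(a * ε)) • T (S v) := by
        have h := hSid v
        rw [hUv, hUKv] at h
        first
        | linear_combination (norm := module) -h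
        | linear_combination (norm := module) h
      set k := T (S v) with hk
      have hTvW : T v ∈ Submodule.span (ZMod q) {v, k} := by
        rw [hTv]
        exact Submodule.add_mem _ (Submodule.smul_mem _ _ hvW) (Submodule.smul_mem _ _ hKW)
      have hSvW : S v ∈ Submodule.span (ZMod q) {v, k} := by
        rw [hSv]
        exact Submodule.add_mem _ (Submodule.smul_mem _ _ hvW) (Submodule.smul_mem _ _ hKW)
      have hTKW : T k ∈ Submodule.span (ZMod q) {v, k} := by
        rw [hk, hTT]
        exact Submodule.neg_mem _ hSvW
      have hSKW : S k ∈ Submodule.span (ZMod q) {v, k} := by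
        rw [hk, hSTS]
        exact hTvW
      intro u hu
      induction hu using Submodule.span_induction with
      | mem x hx =>
        rcases hx with hx | hx
        · subst hx; first | exact hTvW | exact hSvW
        · rw [Set.mem_singleton_iff] at hx; subst hx
          first | exact hTKW | exact hSKW
      | zero => rw [map_zero]; exact Submodule.zero_mem _
      | add x y hx hy ihx ihy => rw [map_add]; exact Submodule.add_mem _ ihx ihy
      | smul c x hx ihx => rw [map_smul]; exact Submodule.smul_mem _ _ ihx
    }
  rcases eq_or_ne (U w) (-w) with hc | hc
  · exact main w (-1) (by rw [neg_smul, one_smul, hc]) hw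
  · refine main (w + U w) 1 ?_ ?_
    · rw [one_smul, map_add, hU2, add_comm]
    · intro h
      exact hc (by rw [← neg_eq_of_add_eq_zero_right h])

end QuatSpan

section QAct

variable {G : Type*} [Group G] (A B : Subgroup G) [hAn : A.Normal] [hBn : B.Normal]

/-- Conjugation by `g : G` as a homomorphism `A →* A`, for `A` normal. -/
def conjHom (g : G) : A →* A where
  toFun a := ⟨g * a * g⁻¹, hAn.conj_mem a.1 a.2 g⟩
  map_one' := by ext; simp
  map_mul' x y := by ext; simp [mul_assoc]

/-- The action of conjugation by `g` on the quotient `A ⧸ (B.subgroupOf A)`. -/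
def qact (g : G) : (A ⧸ B.subgroupOf A) →* (A ⧸ B.subgroupOf A) :=
  QuotientGroup.map _ _ (conjHom A g) (by
    intro a ha
    rw [Subgroup.mem_comap, Subgroup.mem_subgroupOf] at *
    exact hBn.conj_mem _ ha g)

lemma qact_mk (g : G) (a : A) :
    qact A B g ((a : A ⧸ B.subgroupOf A)) = ((conjHom A g a : A) : A ⧸ B.subgroupOf A) :=
  QuotientGroup.map_mk _ _ _ _ _

lemma qact_mul (g₁ g₂ : G) (x : A ⧸ B.subgroupOf A) :
    qact A B (g₁ * g₂) x = qact A B g₁ (qact A B g₂ x) := by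
  refine QuotientGroup.induction_on x ?_
  intro a
  rw [qact_mk, qact_mk, qact_mk]
  congr 1
  ext
  simp [conjHom]
  group

lemma qact_one (x : A ⧸ B.subgroupOf A) : qact A B 1 x = x := by
  refine QuotientGroup.induction_on x ?_
  intro a
  rw [qact_mk]
  congr 1
  ext
  simp [conjHom]

end QAct


/-- `A/B` is a `G`-chief factor: `A`, `B` are normal in `G`, `B < A`, and there is no
normal subgroup of `G` strictly between `B` and `A`. -/
def IsChiefFactor {G : Type*} [Group G] (A B : Subgroup G) : Prop :=
  A.Normal ∧ B.Normal ∧ B < A ∧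
    ∀ C : Subgroup G, C.Normal → B < C → C ≤ A → C = A

open SemidirectProduct QuaternionGroup

/-- Let the quaternion group `H ≅ Q₈` act Frobeniusly on a finite
group `N`, let `G = N ⋊ H`, and let `A/B` be a `G`-chief factor in `N` of order `q^m`
for a prime `q`. Then `m = 2`. -/
theorem stmt10 {H N : Type*} [Group H] [Group N] [Finite N]
    (e : H ≃* QuaternionGroup 2) (φ : H →* MulAut N)
    (hfrob : ∀ h : H, h ≠ 1 → ∀ n : N, n ≠ 1 → φ h n ≠ n)
    (A B : Subgroup (N ⋊[φ] H))
    (hA : A ≤ (SemidirectProduct.inl : N →* N ⋊[φ] H).range)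
    (hcf : IsChiefFactor A B)
    {q m : ℕ} (hq : q.Prime) (hcard : B.relIndex A = q ^ m) :
    m = 2 := by
  classical
  obtain ⟨hAn, hBn, hBA, hmax⟩ := hcf
  haveI := hAn; haveI := hBn
  haveI : Fact q.Prime := ⟨hq⟩
  haveI : NeZero q := ⟨hq.ne_zero⟩
  haveI : Finite H := Finite.of_equiv _ e.symm.toEquiv
  haveI : Finite (N ⋊[φ] H) := Finite.of_equiv (N × H)
    ⟨fun p => ⟨p.1, p.2⟩, fun g => (g.left, g.right), fun p => rfl, fun g => rfl⟩
  -- distinguished elements of H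
  set z : H := e.symm (a 2) with hz
  set i : H := e.symm (a 1) with hi
  set j : H := e.symm (xa 0) with hj
  have hz1 : z ≠ 1 := by
    intro hzz
    have h2 : (a 2 : QuaternionGroup 2) = 1 := by
      have := congrArg e hzz
      rwa [hz, e.apply_symm_apply, map_one] at this
    exact absurd h2 (by decide)
  have hz2 : z * z = 1 := by
    rw [hz, ← map_mul, show (a 2 * a 2 : QuaternionGroup 2) = 1 by decide, map_one]
  have hii : i * i = z := by
    rw [hi, hz, ← map_mul]
    exact congrArg e.symm (by decide)
  have hjj : j * j = z := by
    rw [hj, hz, ← map_mul]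
    exact congrArg e.symm (by decide)
  have hij : i * j = j * z * i := by
    rw [hi, hj, hz, ← map_mul, ← map_mul, ← map_mul]
    exact congrArg e.symm (by decide)
  -- φ z is a fixed-point-free involution, hence inversion, and N is abelian
  have hfpf : MonoidHom.FixedPointFree ⇑((φ z : MulAut N) : N →* N) := by
    intro n hn
    by_contra h
    exact hfrob z hz1 n h hn
  have hinvol : Function.Involutive ⇑((φ z : MulAut N) : N →* N) := by
    intro n
    show φ z (φ z n) = n
    have : φ z * φ z = 1 := by rw [← map_mul, hz2, map_one]
    calc φ z (φ z n) = (φ z * φ z) n := rfl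
    _ = n := by rw [this]; rfl
  have hinv : ∀ n : N, φ z n = n⁻¹ :=
    fun n => congrFun (hfpf.coe_eq_inv_of_involutive hinvol) n
  have ncomm : ∀ x y : N, x * y = y * x :=
    fun x y => hfpf.commute_all_of_involutive hinvol x y
  -- basic facts about V = A ⧸ B
  have hcardV : Nat.card (A ⧸ B.subgroupOf A) = q ^ m := hcard
  obtain ⟨g₀, hg₀A, hg₀B⟩ := SetLike.exists_of_lt hBA
  set x₀ : A ⧸ B.subgroupOf A := ((⟨g₀, hg₀A⟩ : A) : A ⧸ B.subgroupOf A) with hx₀def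
  have hx₀ : x₀ ≠ 1 := by
    intro hh
    rw [hx₀def, QuotientGroup.eq_one_iff, Subgroup.mem_subgroupOf] at hh
    exact hg₀B hh
  have hm0 : m ≠ 0 := by
    intro h
    rw [h, pow_zero] at hcardV
    obtain ⟨_, hall⟩ := Nat.card_eq_one_iff_exists.mp hcardV
    exact hx₀ ((hall x₀).trans (hall 1).symm)
  have hAcomm : ∀ g₁ ∈ A, ∀ g₂ ∈ A, g₁ * g₂ = g₂ * g₁ := by
    intro g₁ h₁ g₂ h₂
    obtain ⟨n₁, rfl⟩ := hA h₁
    obtain ⟨n₂, rfl⟩ := hA h₂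
    rw [← map_mul, ← map_mul, ncomm]
  have hVcomm : ∀ x y : A ⧸ B.subgroupOf A, x * y = y * x := by
    intro x y
    refine QuotientGroup.induction_on x ?_
    intro a1
    refine QuotientGroup.induction_on y ?_
    intro a2
    show ((a1 * a2 : A) : A ⧸ B.subgroupOf A) = ((a2 * a1 : A) : A ⧸ B.subgroupOf A)
    exact congrArg _ (Subtype.ext (hAcomm a1 a1.2 a2 a2.2))
  -- Cauchy: an element of order q in V
  haveI : Fintype (A ⧸ B.subgroupOf A) := Fintype.ofFinite _
  obtain ⟨x₁, hx₁⟩ : ∃ x : A ⧸ B.subgroupOf A, orderOf x = q := by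
    refine exists_prime_orderOf_dvd_card q ?_
    rw [← Nat.card_eq_fintype_card, hcardV]
    exact dvd_pow_self q hm0
  obtain ⟨a₁, ha₁⟩ := QuotientGroup.mk_surjective x₁
  -- every element of A has q-th power in B
  have hΩ : ∀ g ∈ A, g ^ q ∈ B := by
    set Ω : Subgroup (N ⋊[φ] H) :=
      { carrier := {g | g ∈ A ∧ g ^ q ∈ B}
        one_mem' := ⟨A.one_mem, by simpa using B.one_mem⟩
        mul_mem' := by
          rintro g₁ g₂ ⟨hg₁A, hg₁B⟩ ⟨hg₂A, hg₂B⟩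
          refine ⟨A.mul_mem hg₁A hg₂A, ?_⟩
          rw [Commute.mul_pow (hAcomm g₁ hg₁A g₂ hg₂A)]
          exact B.mul_mem hg₁B hg₂B
        inv_mem' := by
          rintro g ⟨hgA, hgB⟩
          exact ⟨A.inv_mem hgA, by rw [inv_pow]; exact B.inv_mem hgB⟩ } with hΩdef
    have hΩn : Ω.Normal := by
      constructor
      rintro g ⟨hgA, hgB⟩ c
      refine ⟨hAn.conj_mem g hgA c, ?_⟩
      have hcp : (c * g * c⁻¹) ^ q = c * g ^ q * c⁻¹ := by
        rw [show c * g * c⁻¹ = (MulAut.conj c) g from rfl, ← map_pow]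
        rfl
      rw [hcp]
      exact hBn.conj_mem _ hgB c
    have hBΩ : B < Ω := by
      refine (SetLike.lt_iff_le_and_exists (p := B) (q := Ω)).mpr
        ⟨fun g hg => ⟨hBA.le hg, B.pow_mem hg q⟩, (a₁ : N ⋊[φ] H), ⟨a₁.2, ?_⟩, ?_⟩
      · have hxq : x₁ ^ q = 1 := by rw [← hx₁]; exact pow_orderOf_eq_one x₁
        rw [← ha₁, ← QuotientGroup.mk_pow, QuotientGroup.eq_one_iff,
          Subgroup.mem_subgroupOf] at hxq
        exact hxq
      · intro hb
        have hone : x₁ = 1 := by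
          rw [← ha₁, QuotientGroup.eq_one_iff, Subgroup.mem_subgroupOf]
          exact hb
        rw [hone, orderOf_one] at hx₁
        exact hq.ne_one hx₁.symm
    have hΩA := hmax Ω hΩn hBΩ (fun g hg => hg.1)
    intro g hg
    rw [← hΩA] at hg
    exact hg.2
  have hexp : ∀ x : A ⧸ B.subgroupOf A, x ^ q = 1 := by
    intro x
    refine QuotientGroup.induction_on x ?_
    intro a2
    show ((a2 : A) : A ⧸ B.subgroupOf A) ^ q = 1
    rw [← QuotientGroup.mk_pow, QuotientGroup.eq_one_iff, Subgroup.mem_subgroupOf]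
    exact hΩ (a2 : N ⋊[φ] H) a2.2
  -- q ≠ 2
  have hq2 : q ≠ 2 := by
    intro h2
    have hdvd : q ∣ Nat.card A := by
      rw [Subgroup.card_eq_card_quotient_mul_card_subgroup (B.subgroupOf A)]
      exact Dvd.dvd.mul_right (hcardV ▸ dvd_pow_self q hm0) _
    haveI : Fintype A := Fintype.ofFinite A
    obtain ⟨gA, hgA2⟩ := exists_prime_orderOf_dvd_card (G := A) 2
      (by rw [← Nat.card_eq_fintype_card, ← h2]; exact hdvd)
    obtain ⟨n₂, hn₂⟩ := hA gA.2
    have hgA1 : gA ≠ 1 := by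
      intro hone
      rw [hone, orderOf_one] at hgA2
      norm_num at hgA2
    have hn₂1 : n₂ ≠ 1 := by
      intro hone
      apply hgA1
      apply Subtype.ext
      rw [← hn₂, hone, map_one]
      rfl
    have hn₂2 : n₂ * n₂ = 1 := by
      apply SemidirectProduct.inl_injective (φ := φ)
      have hpow := pow_orderOf_eq_one gA
      rw [hgA2] at hpow
      have h2' : ((gA ^ 2 : A) : N ⋊[φ] H) = 1 := by rw [hpow]; rfl
      rw [SubgroupClass.coe_pow, pow_two] at h2'
      rw [map_mul, hn₂, map_one]
      exact h2'
    refine hfrob z hz1 n₂ hn₂1 ?_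
    rw [hinv n₂]
    exact inv_eq_of_mul_eq_one_left hn₂2
  -- module structure on Additive (A ⧸ B.subgroupOf A)
  letI instCG : CommGroup (A ⧸ B.subgroupOf A) :=
    { (inferInstance : Group (A ⧸ B.subgroupOf A)) with mul_comm := hVcomm }
  haveI instMod : Module (ZMod q) (Additive (A ⧸ B.subgroupOf A)) :=
    AddCommGroup.zmodModule (by
      intro x
      show q • x = 0
      have hx : x.toMul ^ q = 1 := hexp x.toMul
      rw [← ofMul_toMul x, ← ofMul_pow, hx]
      rfl)
  -- action maps on V
  set Fa : H → ((A ⧸ B.subgroupOf A) →* (A ⧸ B.subgroupOf A)) :=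
    fun h => qact A B (inr h) with hFa
  have hFmul : ∀ h₁ h₂ x, Fa (h₁ * h₂) x = Fa h₁ (Fa h₂ x) := by
    intro h₁ h₂ x
    rw [hFa]
    simp only
    rw [map_mul, qact_mul]
  have hFone : ∀ x, Fa 1 x = x := by
    intro x
    rw [hFa]
    simp only
    rw [map_one, qact_one]
  have hFz : ∀ x, Fa z x = x⁻¹ := by
    intro x
    refine QuotientGroup.induction_on x ?_
    intro a2
    rw [hFa]
    simp only
    rw [qact_mk]
    show _ = ((a2⁻¹ : A) : A ⧸ B.subgroupOf A)
    congr 1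
    apply Subtype.ext
    show inr z * (a2 : N ⋊[φ] H) * (inr z)⁻¹ = (a2 : N ⋊[φ] H)⁻¹
    obtain ⟨n₃, hn₃⟩ := hA a2.2
    rw [← hn₃, show ((inr z : N ⋊[φ] H))⁻¹ = inr z⁻¹ from (map_inv inr z).symm,
      ← SemidirectProduct.inl_aut, hinv n₃, map_inv]
  have hTT : ∀ x, Fa i (Fa i x) = x⁻¹ := by
    intro x
    rw [← hFmul, hii, hFz]
  have hSS : ∀ x, Fa j (Fa j x) = x⁻¹ := by
    intro x
    rw [← hFmul, hjj, hFz]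
  have hTSrel : ∀ x, Fa i (Fa j x) = (Fa j (Fa i x))⁻¹ := by
    intro x
    rw [← hFmul, hij, hFmul, hFmul, hFz, map_inv]
  -- m ≠ 1
  have hm1 : m ≠ 1 := by
    intro h1
    have hcardq : Nat.card (A ⧸ B.subgroupOf A) = q := by rw [hcardV, h1, pow_one]
    have hx₀q : orderOf x₀ = q := by
      have hd : orderOf x₀ ∣ q := by rw [← hcardq]; exact orderOf_dvd_natCard x₀
      rcases hq.eq_one_or_self_of_dvd _ hd with h | h
      · exact absurd (orderOf_eq_one_iff.mp h) hx₀
      · exact h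
    have htop' : Subgroup.zpowers x₀ = ⊤ := by
      apply Subgroup.eq_top_of_card_eq
      rw [Nat.card_zpowers, hx₀q, hcardq]
    have hzp : ∀ y, ∃ k : ℤ, x₀ ^ k = y := by
      intro y
      have hy : y ∈ Subgroup.zpowers x₀ := htop' ▸ Subgroup.mem_top y
      exact Subgroup.mem_zpowers_iff.mp hy
    obtain ⟨s, hs⟩ := hzp (Fa i x₀)
    obtain ⟨t, ht⟩ := hzp (Fa j x₀)
    have hrel := hTSrel x₀
    rw [← hs, ← ht, map_zpow, map_zpow, ← hs, ← ht, ← zpow_mul, ← zpow_mul] at hrel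
    have h2st : x₀ ^ (s * t + t * s) = 1 := by
      rw [zpow_add, hrel, inv_mul_cancel]
    have hdvd2 : (q : ℤ) ∣ (s * t + t * s) := by
      have := orderOf_dvd_iff_zpow_eq_one.mpr h2st
      rwa [hx₀q] at this
    have hqi : Prime (q : ℤ) := Nat.prime_iff_prime_int.mp hq
    rw [show s * t + t * s = 2 * (s * t) by ring] at hdvd2
    rcases hqi.dvd_mul.mp hdvd2 with hd | hd
    · have hdd : q ∣ 2 := by exact_mod_cast hd
      exact hq2 ((Nat.prime_dvd_prime_iff_eq hq Nat.prime_two).mp hdd)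
    · have hkill : ∀ (h : H) (k : ℤ), x₀ ^ k = Fa h x₀ → (q:ℤ) ∣ k → False := by
        intro h k hk hdk
        have hone : Fa h x₀ = 1 := by
          rw [← hk]
          exact orderOf_dvd_iff_zpow_eq_one.mp (by rw [hx₀q]; exact hdk)
        apply hx₀
        have hback : Fa h⁻¹ (Fa h x₀) = x₀ := by rw [← hFmul, inv_mul_cancel, hFone]
        rw [← hback, hone, map_one]
      rcases hqi.dvd_mul.mp hd with hd' | hd'
      · exact hkill i s hs hd'
      · exact hkill j t ht hd'
  -- set up the linear maps on Additive V
  obtain ⟨sa, sb, hab⟩ := ZMod.sq_add_sq q (-1)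
  set Tl : Additive (A ⧸ B.subgroupOf A) →ₗ[ZMod q] Additive (A ⧸ B.subgroupOf A) :=
    AddMonoidHom.toZModLinearMap q (MonoidHom.toAdditive (Fa i)) with hTldef
  set Sl : Additive (A ⧸ B.subgroupOf A) →ₗ[ZMod q] Additive (A ⧸ B.subgroupOf A) :=
    AddMonoidHom.toZModLinearMap q (MonoidHom.toAdditive (Fa j)) with hSldef
  have hTlap : ∀ x : A ⧸ B.subgroupOf A, Tl (Additive.ofMul x) = Additive.ofMul (Fa i x) :=
    fun _ => rfl
  have hSlap : ∀ x : A ⧸ B.subgroupOf A, Sl (Additive.ofMul x) = Additive.ofMul (Fa j x) :=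
    fun _ => rfl
  have hTT' : ∀ u, Tl (Tl u) = -u := by
    intro u
    show Additive.ofMul (Fa i (Fa i u.toMul)) = -u
    rw [hTT, ofMul_inv, ofMul_toMul]
  have hSS' : ∀ u, Sl (Sl u) = -u := by
    intro u
    show Additive.ofMul (Fa j (Fa j u.toMul)) = -u
    rw [hSS, ofMul_inv, ofMul_toMul]
  have hTS' : ∀ u, Tl (Sl u) = -Sl (Tl u) := by
    intro u
    show Additive.ofMul (Fa i (Fa j u.toMul)) = -(Additive.ofMul (Fa j (Fa i u.toMul)))
    rw [hTSrel, ofMul_inv]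
  have hw0 : Additive.ofMul x₀ ≠ 0 := by
    intro h
    exact hx₀ (Additive.ofMul.injective h)
  obtain ⟨v₁, v₂, hv₁0, hTinv, hSinv⟩ := quat_span Tl Sl hTT' hSS' hTS' sa sb hab hw0
  set W := Submodule.span (ZMod q) {v₁, v₂} with hWdef
  -- invariance of W under all of H
  have hPall : ∀ (h : H) (x : A ⧸ B.subgroupOf A),
      Additive.ofMul x ∈ W → Additive.ofMul (Fa h x) ∈ W := by
    have hPi : ∀ x, Additive.ofMul x ∈ W → Additive.ofMul (Fa i x) ∈ W := by
      intro x hx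
      have := hTinv _ hx
      rwa [hTlap] at this
    have hPj : ∀ x, Additive.ofMul x ∈ W → Additive.ofMul (Fa j x) ∈ W := by
      intro x hx
      have := hSinv _ hx
      rwa [hSlap] at this
    have hPpow : ∀ (n : ℕ) (x), Additive.ofMul x ∈ W → Additive.ofMul (Fa (i ^ n) x) ∈ W := by
      intro n
      induction n with
      | zero => intro x hx; rw [pow_zero, hFone]; exact hx
      | succ k ih =>
        intro x hx
        rw [pow_succ, hFmul]
        exact ih _ (hPi x hx)
    intro h
    rcases h' : e h with k | k
    · have hrep : h = i ^ k.val := by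
        calc h = e.symm (e h) := (e.symm_apply_apply h).symm
        _ = e.symm (a k) := by rw [h']
        _ = e.symm (a 1 ^ k.val) := by rw [a_one_pow, ZMod.natCast_rightInverse k]
        _ = i ^ k.val := by rw [map_pow, hi]
      rw [hrep]
      exact hPpow k.val
    · have hrep : h = j * i ^ k.val := by
        calc h = e.symm (e h) := (e.symm_apply_apply h).symm
        _ = e.symm (xa k) := by rw [h']
        _ = e.symm (xa 0 * a 1 ^ k.val) := by
            rw [a_one_pow, ZMod.natCast_rightInverse k, xa_mul_a, zero_add]
        _ = j * i ^ k.val := by rw [map_mul, map_pow, hi, hj]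
      intro x hx
      rw [hrep, hFmul]
      exact hPj _ (hPpow k.val x hx)
  -- the subgroup C corresponding to W
  set C : Subgroup (N ⋊[φ] H) :=
    { carrier := {g | ∃ hg : g ∈ A,
        Additive.ofMul (((⟨g, hg⟩ : A) : A ⧸ B.subgroupOf A)) ∈ W}
      one_mem' := ⟨A.one_mem, zero_mem W⟩
      mul_mem' := by
        rintro g₁ g₂ ⟨hg₁, hw₁⟩ ⟨hg₂, hw₂⟩
        exact ⟨A.mul_mem hg₁ hg₂, add_mem hw₁ hw₂⟩
      inv_mem' := by
        rintro g ⟨hg, hw⟩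
        exact ⟨A.inv_mem hg, neg_mem hw⟩ } with hCdef
  have hCn : C.Normal := by
    constructor
    rintro g ⟨hgA, hgW⟩ c
    have hg2A : inr c.right * g * (inr c.right)⁻¹ ∈ A := hAn.conj_mem g hgA _
    have hconjc : c * g * c⁻¹ = inr c.right * g * (inr c.right)⁻¹ := by
      conv_lhs => rw [← SemidirectProduct.inl_left_mul_inr_right c]
      rw [show ∀ (x y gg : N ⋊[φ] H), (x * y) * gg * (x * y)⁻¹ = x * (y * gg * y⁻¹) * x⁻¹
        from fun x y gg => by group]
      obtain ⟨nx, hnx⟩ := hA hg2A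
      rw [← hnx, show ((inl c.left : N ⋊[φ] H))⁻¹ = inl c.left⁻¹ from (map_inv inl _).symm,
        ← map_mul, ← map_mul]
      congr 1
      rw [ncomm c.left nx, mul_assoc, mul_inv_cancel, mul_one]
    refine ⟨hconjc ▸ hg2A, ?_⟩
    have hmkeq : ∀ (hpf : c * g * c⁻¹ ∈ A),
        ((⟨c * g * c⁻¹, hpf⟩ : A) : A ⧸ B.subgroupOf A)
          = Fa c.right ((⟨g, hgA⟩ : A) : A ⧸ B.subgroupOf A) := by
      intro hpf
      rw [hFa]
      simp only
      rw [qact_mk]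
      congr 1
      apply Subtype.ext
      exact hconjc
    rw [hmkeq]
    exact hPall c.right _ hgW
  have hBC : B ≤ C := by
    intro g hg
    refine ⟨hBA.le hg, ?_⟩
    rw [show ((⟨g, hBA.le hg⟩ : A) : A ⧸ B.subgroupOf A) = 1 from
      (QuotientGroup.eq_one_iff _).mpr (Subgroup.mem_subgroupOf.mpr hg)]
    exact zero_mem W
  obtain ⟨aa, haa⟩ := QuotientGroup.mk_surjective v₁.toMul
  have hBltC : B < C := by
    refine (SetLike.lt_iff_le_and_exists (p := B) (q := C)).mpr ⟨hBC, (aa : N ⋊[φ] H), ⟨aa.2, ?_⟩, ?_⟩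
    · rw [show ((⟨(aa : N ⋊[φ] H), aa.2⟩ : A) : A ⧸ B.subgroupOf A) = v₁.toMul from by
        rw [← haa]]
      rw [ofMul_toMul]
      exact Submodule.subset_span (Set.mem_insert _ _)
    · intro hb
      apply hv₁0
      have hone : v₁.toMul = 1 := by
        rw [← haa, QuotientGroup.eq_one_iff, Subgroup.mem_subgroupOf]
        exact hb
      rw [← ofMul_toMul v₁, hone]
      rfl
  have hCeq := hmax C hCn hBltC (fun g hg => hg.1)
  have htopW : ∀ u : Additive (A ⧸ B.subgroupOf A), u ∈ W := by
    intro u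
    obtain ⟨bb, hbb⟩ := QuotientGroup.mk_surjective u.toMul
    have hbbC : (bb : N ⋊[φ] H) ∈ C := by rw [hCeq]; exact bb.2
    obtain ⟨hgA', hw'⟩ := hbbC
    have heq : Additive.ofMul (((⟨(bb : N ⋊[φ] H), hgA'⟩ : A) : A ⧸ B.subgroupOf A)) = u := by
      rw [show (⟨(bb : N ⋊[φ] H), hgA'⟩ : A) = bb from rfl, hbb, ofMul_toMul]
    rw [← heq]
    exact hw'
  have hsurj : Function.Surjective
      (fun p : ZMod q × ZMod q => p.1 • v₁ + p.2 • v₂) := by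
    intro u
    obtain ⟨c1, c2, hc⟩ := Submodule.mem_span_pair.mp (htopW u)
    exact ⟨(c1, c2), hc⟩
  have hle : q ^ m ≤ q * q := by
    have hcc := Nat.card_le_card_of_surjective _ hsurj
    rw [Nat.card_prod, Nat.card_zmod] at hcc
    calc q ^ m = Nat.card (A ⧸ B.subgroupOf A) := hcardV.symm
    _ = Nat.card (Additive (A ⧸ B.subgroupOf A)) := (Nat.card_congr Additive.toMul).symm
    _ ≤ q * q := hcc
  have hm2 : m ≤ 2 := by
    have : q ^ m ≤ q ^ 2 := by rw [pow_two]; exact hle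
    exact (Nat.pow_le_pow_iff_right hq.one_lt).mp this
  omega
end

section
/- Let p, q, r be primes, and let G = V ⋊ H where H is a Frobenius group with complement C_p and kernel Q ≅ C_q, and VQ is a Frobenius group with complement Q and kernel V ≅ (C_r)^{pm}. If q = (r^{pm} − 1)/(r^m − 1), then V is a minimal normal subgroup of VQ. -/
/-- Key number-theoretic lemma: if `q = (r^{pm}-1)/(r^m-1)` is prime and `q ∣ r^k - 1`
with `1 ≤ k ≤ pm`, then `k = pm`. -/
lemma stmt15_nt {p q r m k : ℕ} (hp : p.Prime) (hq : q.Prime) (hr : r.Prime) (hm : 1 ≤ m)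
    (hk : 1 ≤ k) (hkle : k ≤ p * m)
    (hqval : q = (r ^ (p * m) - 1) / (r ^ m - 1))
    (hdvd : q ∣ r ^ k - 1) : k = p * m := by
  have hr2 : 2 ≤ r := hr.two_le
  have hp2 : 2 ≤ p := hp.two_le
  have hpm1 : 1 ≤ p * m := by nlinarith
  have hrm2 : 2 ≤ r ^ m := le_trans hr2 (Nat.le_self_pow (by omega) r)
  have hmdvd : r ^ m - 1 ∣ r ^ (p * m) - 1 := by
    have := Nat.sub_dvd_pow_sub_pow (r ^ m) 1 p
    simpa [one_pow, ← pow_mul, mul_comm m p] using this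
  have hqe : q * (r ^ m - 1) = r ^ (p * m) - 1 := by
    rw [hqval]; exact Nat.div_mul_cancel hmdvd
  have hqpm : q ∣ r ^ (p * m) - 1 := ⟨r ^ m - 1, hqe.symm⟩
  haveI : Fact q.Prime := ⟨hq⟩
  have key : ∀ a : ℕ, 1 ≤ a → ((r : ZMod q) ^ a = 1 ↔ q ∣ r ^ a - 1) := by
    intro a _
    have h1 : 1 ≤ r ^ a := Nat.one_le_pow _ _ hr.pos
    rw [← ZMod.natCast_eq_zero_iff, Nat.cast_sub h1, Nat.cast_pow, Nat.cast_one,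
      sub_eq_zero]
  set d := orderOf (r : ZMod q) with hd
  have hdpm : d ∣ p * m := orderOf_dvd_iff_pow_eq_one.mpr ((key _ hpm1).mpr hqpm)
  have hdk : d ∣ k := orderOf_dvd_iff_pow_eq_one.mpr ((key _ hk).mpr hdvd)
  have hd0 : 0 < d := Nat.pos_of_dvd_of_pos hdpm (by omega)
  have hqd : q ∣ r ^ d - 1 := (key d hd0).mp (pow_orderOf_eq_one _)
  -- q > r^((p-1)*m)
  have hBA : r ^ ((p - 1) * m) ≤ r ^ (p * m) :=
    Nat.pow_le_pow_right hr.pos (Nat.mul_le_mul_right m (by omega))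
  have hB2 : 2 ≤ r ^ ((p - 1) * m) :=
    le_trans hr2 (Nat.le_self_pow (Nat.mul_ne_zero (by omega) (by omega)) r)
  have hqgt : r ^ ((p - 1) * m) < q := by
    by_contra hle
    push_neg at hle
    have hexp : (p - 1) * m + m = p * m := by
      calc (p - 1) * m + m = (p - 1 + 1) * m := by ring
        _ = p * m := by congr 1; omega
    have h1 : r ^ ((p - 1) * m) * (r ^ m - 1) = r ^ (p * m) - r ^ ((p - 1) * m) := by
      rw [Nat.mul_sub, mul_one, ← pow_add, hexp]
    have h2 : q * (r ^ m - 1) ≤ r ^ ((p - 1) * m) * (r ^ m - 1) :=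
      Nat.mul_le_mul_right _ hle
    rw [hqe, h1] at h2
    omega
  have hdeq : d = p * m := by
    by_contra hne
    have hdlt : d < p * m := lt_of_le_of_ne (Nat.le_of_dvd (by omega) hdpm) hne
    obtain ⟨t, ht⟩ := hdpm
    have ht2 : 2 ≤ t := by
      rcases t with _ | _ | t
      · omega
      · omega
      · omega
    have h2d : 2 * d ≤ p * m := by
      calc 2 * d = d * 2 := by ring
        _ ≤ d * t := Nat.mul_le_mul_left d ht2
        _ = p * m := ht.symm
    have hple : p ≤ 2 * (p - 1) := by omega
    have hdle : d ≤ (p - 1) * m := by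
      have : p * m ≤ 2 * ((p - 1) * m) := by
        calc p * m ≤ (2 * (p - 1)) * m := Nat.mul_le_mul_right m hple
          _ = 2 * ((p - 1) * m) := by ring
      omega
    have hrd1 : 2 ≤ r ^ d := le_trans hr2 (Nat.le_self_pow (by omega) r)
    have hqled : q ≤ r ^ d - 1 := Nat.le_of_dvd (by omega) hqd
    have : r ^ d ≤ r ^ ((p - 1) * m) := Nat.pow_le_pow_right hr.pos hdle
    omega
  have : p * m ≤ k := Nat.le_of_dvd (by omega) (hdeq ▸ hdk)
  omega

/-- Let `p, q, r` be primes and `G = V ⋊ H`, where `H` is a Frobenius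
group with complement `P ≅ C_p` and kernel `Q ≅ C_q`, and `VQ` is a Frobenius group
with complement `Q` and kernel `V ≅ (C_r)^{pm}`. If `q = (r^{pm} - 1)/(r^m - 1)`, then
`V` is a minimal normal subgroup of `VQ`. -/
theorem stmt15 {p q r m : ℕ} (hp : p.Prime) (hq : q.Prime) (hr : r.Prime) (hm : 1 ≤ m)
    {G : Type*} [Group G] [Finite G] (V Q P H : Subgroup G)
    (hVnorm : V.Normal) (hH : V.IsComplement' H)
    (hQH : Q ≤ H) (hPH : P ≤ H)
    (hQnormH : ∀ h ∈ H, ∀ x ∈ Q, h * x * h⁻¹ ∈ Q)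
    (hQcard : Nat.card ↥Q = q) (hPcard : Nat.card ↥P = p)
    (hHcard : Nat.card ↥H = p * q)
    (hfrobH : ∀ a ∈ P, a ≠ 1 → ∀ x ∈ Q, x ≠ 1 → a * x ≠ x * a)
    (hfrobVQ : ∀ x ∈ Q, x ≠ 1 → ∀ v ∈ V, v ≠ 1 → x * v ≠ v * x)
    (hVcard : Nat.card ↥V = r ^ (p * m))
    (hVelem : ∀ v ∈ V, v ^ r = 1)
    (hVab : ∀ a ∈ V, ∀ b ∈ V, a * b = b * a)
    (hqval : q = (r ^ (p * m) - 1) / (r ^ m - 1)) :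
    ∀ W : Subgroup G, W ≠ ⊥ → W ≤ V →
      (∀ x ∈ V ⊔ Q, ∀ w ∈ W, x * w * x⁻¹ ∈ W) → W = V := by
  intro W hWbot hWV hWinv
  classical
  have hQle : Q ≤ V ⊔ Q := le_sup_right
  -- conjugation action of Q on W
  letI : SMul ↥Q ↥W :=
    ⟨fun x w => ⟨x.1 * w.1 * x.1⁻¹, hWinv x.1 (hQle x.2) w.1 w.2⟩⟩
  have smul_def : ∀ (x : ↥Q) (w : ↥W), ((x • w : ↥W) : G) = x.1 * w.1 * x.1⁻¹ :=
    fun _ _ => rfl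
  letI : MulAction ↥Q ↥W :=
    { one_smul := fun w => Subtype.ext (by rw [smul_def]; simp)
      mul_smul := fun x y w => Subtype.ext (by
        rw [smul_def, smul_def, smul_def]
        simp [mul_assoc]) }
  haveI : Finite ↥W := Subtype.finite
  haveI : Fact q.Prime := ⟨hq⟩
  have hPQ : IsPGroup q ↥Q := IsPGroup.of_card (by rw [hQcard, pow_one])
  have hmod := hPQ.card_modEq_card_fixedPoints ↥W
  -- there is a nontrivial element of Q
  have hQne : ∃ x ∈ Q, x ≠ (1 : G) := by
    by_contra h
    push_neg at h
    have : Q = ⊥ := (Subgroup.eq_bot_iff_forall Q).mpr h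
    rw [this, Subgroup.card_bot] at hQcard
    have := hq.one_lt
    omega
  obtain ⟨x, hxQ, hx1⟩ := hQne
  -- every fixed point is trivial
  have hfix : ∀ w : ↥W, w ∈ MulAction.fixedPoints ↥Q ↥W → (w : G) = 1 := by
    intro w hw
    by_contra hne
    have h1 := hw (⟨x, hxQ⟩ : ↥Q)
    have h2 : x * (w : G) * x⁻¹ = w := by
      have := congrArg (fun z : ↥W => (z : G)) h1
      simpa [smul_def] using this
    have h3 : x * (w : G) = (w : G) * x := by
      have := congrArg (fun z => z * x) h2
      simpa [mul_assoc] using this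
    exact hfrobVQ x hxQ hx1 w (hWV w.2) hne h3
  have hone : (⟨1, W.one_mem⟩ : ↥W) ∈ MulAction.fixedPoints ↥Q ↥W := by
    intro y
    exact Subtype.ext (by rw [smul_def]; simp)
  have hcardfix : Nat.card (MulAction.fixedPoints ↥Q ↥W) = 1 := by
    rw [Nat.card_eq_one_iff_unique]
    constructor
    · constructor
      intro a b
      apply Subtype.ext
      apply Subtype.ext
      rw [hfix a.1 a.2, hfix b.1 b.2]
    · exact ⟨⟨⟨1, W.one_mem⟩, hone⟩⟩
  rw [hcardfix] at hmod
  have hWpos : 0 < Nat.card ↥W := Nat.card_pos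
  have hqdvdW : q ∣ Nat.card ↥W - 1 := (Nat.modEq_iff_dvd' hWpos).mp hmod.symm
  -- card of W is a power of r
  have hWdvd : Nat.card ↥W ∣ r ^ (p * m) := hVcard ▸ Subgroup.card_dvd_of_le hWV
  obtain ⟨k, hkle, hWcard⟩ := (Nat.dvd_prime_pow hr).mp hWdvd
  have hk1 : 1 ≤ k := by
    by_contra h
    push_neg at h
    interval_cases k
    · exact hWbot (Subgroup.card_eq_one.mp (by rw [hWcard, pow_zero]))
  have hkeq : k = p * m :=
    stmt15_nt hp hq hr hm hk1 hkle hqval (by rwa [hWcard] at hqdvdW)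
  -- conclude
  exact Subgroup.eq_of_le_of_card_ge hWV (by rw [hVcard, hWcard, hkeq])
end

section
/- Let p be a prime, m ≥ 1, and r a prime, and suppose the prime q satisfies q = (r^{pm} − 1)/(r^m − 1). Then the multiplicative order of r modulo q does not divide m; in particular q does not divide r^m − 1. -/
lemma geom_aux (s n : ℕ) (hs : 1 ≤ s) :
    (∑ i ∈ Finset.range n, s ^ i) * (s - 1) = s ^ n - 1 := by
  have h1 : (1:ℕ) ≤ s ^ n := Nat.one_le_pow _ _ hs
  have := geom_sum_mul (s : ℤ) n
  have hcast : ((∑ i ∈ Finset.range n, s ^ i) * (s - 1) : ℕ) = ((s:ℤ) ^ n - 1 : ℤ) := by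
    push_cast [Nat.cast_sub hs]
    exact this
  have : ((∑ i ∈ Finset.range n, s ^ i) * (s - 1) : ℕ) = ((s ^ n - 1 : ℕ) : ℤ) := by
    rw [hcast]; push_cast [Nat.cast_sub h1]; ring
  exact_mod_cast this

/-- Let `p, q, r` be primes and `m ≥ 1` with
`q = (r^{pm} - 1)/(r^m - 1)`. Then the multiplicative order of `r` modulo `q` does not
divide `m`; in particular `q` does not divide `r^m - 1`. -/
theorem stmt16 {p q r m : ℕ} (hp : p.Prime) (hq : q.Prime) (hr : r.Prime) (hm : 1 ≤ m)
    (hqval : q = (r ^ (p * m) - 1) / (r ^ m - 1)) :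
    ¬ orderOf (r : ZMod q) ∣ m ∧ ¬ q ∣ r ^ m - 1 := by
  have hs2 : 2 ≤ r ^ m := by
    calc 2 ≤ r := hr.two_le
    _ = r ^ 1 := (pow_one r).symm
    _ ≤ r ^ m := Nat.pow_le_pow_right (le_of_lt hr.one_lt) hm
  have hs1 : 1 ≤ r ^ m := le_trans one_le_two hs2
  have hpow : r ^ (p * m) = (r ^ m) ^ p := by rw [← pow_mul, mul_comm]
  have hqsum : q = ∑ i ∈ Finset.range p, (r ^ m) ^ i := by
    rw [hqval, hpow]
    exact Nat.div_eq_of_eq_mul_left (by omega) (geom_aux (r ^ m) p hs1).symm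
  have hmain : ¬ q ∣ r ^ m - 1 := by
    intro hdvd
    have hsz : ((r ^ m : ℕ) : ZMod q) = 1 := by
      have h0 : ((r ^ m - 1 : ℕ) : ZMod q) = 0 :=
        (ZMod.natCast_eq_zero_iff _ _).mpr hdvd
      rw [Nat.cast_sub hs1] at h0
      linear_combination h0
    rw [Nat.cast_pow] at hsz
    have hpz : ((p : ℕ) : ZMod q) = 0 := by
      have hqz : (((∑ i ∈ Finset.range p, (r ^ m) ^ i : ℕ)) : ZMod q) = 0 := by
        rw [← hqsum]; exact ZMod.natCast_self q
      rw [Nat.cast_sum] at hqz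
      simp only [Nat.cast_pow, hsz, one_pow, Finset.sum_const, Finset.card_range,
        smul_eq_mul, mul_one] at hqz
      simpa using hqz
    have hqp : q ∣ p := (ZMod.natCast_eq_zero_iff _ _).mp hpz
    have heq : q = p := (Nat.prime_dvd_prime_iff_eq hq hp).mp hqp
    have hlt : p < q := by
      rw [hqsum]
      calc p = ∑ _i ∈ Finset.range p, 1 := by simp
      _ < ∑ i ∈ Finset.range p, (r ^ m) ^ i := by
        apply Finset.sum_lt_sum
        · intro i _
          exact Nat.one_le_pow _ _ (by omega)
        · refine ⟨1, Finset.mem_range.mpr hp.one_lt, ?_⟩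
          rw [pow_one]; omega
    omega
  refine ⟨?_, hmain⟩
  intro hord
  apply hmain
  have hr1 : (r : ZMod q) ^ m = 1 := orderOf_dvd_iff_pow_eq_one.mp hord
  have h0 : ((r ^ m - 1 : ℕ) : ZMod q) = 0 := by
    rw [Nat.cast_sub hs1]
    push_cast
    rw [hr1]; ring
  exact (ZMod.natCast_eq_zero_iff _ _).mp h0
end
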